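/- The septic normalized proper Zolotarev polynomial Z at parameter t = −21 satisfies the Abel–Pell differential equation: for every real x, (1 − x^2)·(x − α)·(x − β)·(Z'(x))^2 + 49·(x − γ)^2·(Z(x))^2 = 49·(x − γ)^2. -/

import Mathlib

noncomputable section

def b0 : ℝ := (5236829509 - 598896224 * Real.sqrt 6) / 6591796875

def b1 : ℝ :=
  -(16 / 6591796875) * Real.sqrt (2 * (1174132032293998751 + 484070220858892414 * Real.sqrt 6))

def b2 : ℝ := -(8 / 2197265625) * (1876889773 + 537098572 * Real.sqrt 6)

def b3 : ℝ :=
  (16 / 6591796875) * Real.sqrt (2 * (56229826406521238759 + 22960487256932311726 * Real.sqrt 6))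

def b4 : ℝ := (8 / 6591796875) * (13748181869 + 5603740016 * Real.sqrt 6)

def b5 : ℝ :=
  -(32 / 2197265625) * Real.sqrt (2 * (4907729982259476719 + 2003572376153817166 * Real.sqrt 6))

def b6 : ℝ := -(256 / 6591796875) * (299877839 + 122424446 * Real.sqrt 6)

def b7 : ℝ :=
  (1024 / 6591796875) * Real.sqrt (2 * (11553696783009431 + 4716776960201434 * Real.sqrt 6))

/-- The septic normalized proper Zolotarev polynomial at parameter t = −21. -/
def Z (x : ℝ) : ℝ :=
  b0 + b1 * x + b2 * x ^ 2 + b3 * x ^ 3 + b4 * x ^ 4 + b5 * x ^ 5 + b6 * x ^ 6 + b7 * x ^ 7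

def α : ℝ := (1 / 4) * Real.sqrt ((-1816103 + 742750 * Real.sqrt 6) / 142)

def β : ℝ := (1 / 4) * Real.sqrt ((-330503 + 136350 * Real.sqrt 6) / 142)

def γ : ℝ := (1 / 7) * Real.sqrt ((-2665 + 1138 * Real.sqrt 6) / 2)

/-!
The even coefficients of `Z` lie in `ℚ(√6)`, and the radicals in the odd coefficients, in `β` and
in `γ` are `ℚ(√6)`-multiples of `α`, because each radicand is a square in `ℚ(√6)` times
`α ^ 2 = (-1816103 + 742750 √6) / 2272`. After these substitutions the Abel–Pell equation is a
polynomial identity in `x`, `√6` and `α` that holds modulo this relation and `√6 ^ 2 = 6`.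
-/

-- Phrased with `2 ≤ n` rather than as `s ^ (n + 2) = …` so that `simp` also matches the exponent
-- literals left by `ring_nf`, which `?n + 2` does not unify with.
lemma pow_eq_pow_sub_two_mul_of_sq_eq {M : Type*} [Monoid M] {s c : M} (h : s ^ 2 = c) {n : ℕ}
    (hn : 2 ≤ n) : s ^ n = s ^ (n - 2) * c := by
  rw [← h, ← pow_add, Nat.sub_add_cancel hn]

lemma sqrt_six_sq : √6 ^ 2 = 6 := Real.sq_sqrt (by norm_num)

lemma α_sq : α ^ 2 = (-1816103 + 742750 * √6) / 2272 := by
  rw [α, mul_pow, Real.sq_sqrt (by nlinarith [sqrt_six_sq, Real.sqrt_nonneg 6])]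
  ring

lemma sqrt_eq_mul_α {X c : ℝ} (hc : 0 ≤ c) (h : X = c ^ 2 * ((-1816103 + 742750 * √6) / 2272)) :
    √X = c * α := by
  have hα : 0 ≤ α := by rw [α]; positivity
  rw [h, ← α_sq, ← mul_pow, Real.sqrt_sq (mul_nonneg hc hα)]

lemma b1_eq : b1 = -(16 / 6591796875) * ((11691514258264 + 4793104902896 * √6) / 12911 * α) := by
  rw [b1]
  congr 1
  refine sqrt_eq_mul_α (by positivity) ?_
  ring_nf
  simp only [pow_eq_pow_sub_two_mul_of_sq_eq sqrt_six_sq, Nat.reduceLeDiff, Nat.reduceSub]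
  ring_nf

lemma b3_eq : b3 = (16 / 6591796875) * ((80858994216392 + 33030661006288 * √6) / 12911 * α) := by
  rw [b3]
  congr 1
  refine sqrt_eq_mul_α (by positivity) ?_
  ring_nf
  simp only [pow_eq_pow_sub_two_mul_of_sq_eq sqrt_six_sq, Nat.reduceLeDiff, Nat.reduceSub]
  ring_nf

lemma b5_eq : b5 = -(32 / 2197265625) * ((23894332713832 + 9754828925648 * √6) / 12911 * α) := by
  rw [b5]
  congr 1
  refine sqrt_eq_mul_α (by positivity) ?_
  ring_nf
  simp only [pow_eq_pow_sub_two_mul_of_sq_eq sqrt_six_sq, Nat.reduceLeDiff, Nat.reduceSub]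
  ring_nf

lemma b7_eq : b7 = (1024 / 6591796875) * ((1159351817576 + 473303397664 * √6) / 12911 * α) := by
  rw [b7]
  congr 1
  refine sqrt_eq_mul_α (by positivity) ?_
  ring_nf
  simp only [pow_eq_pow_sub_two_mul_of_sq_eq sqrt_six_sq, Nat.reduceLeDiff, Nat.reduceSub]
  ring_nf

lemma β_eq : β = (9439 + 1600 * √6) / 12911 * α := by
  have h : √((-330503 + 136350 * √6) / 142) = 4 * (9439 + 1600 * √6) / 12911 * α := by
    refine sqrt_eq_mul_α (by positivity) ?_
    ring_nf
    simp only [pow_eq_pow_sub_two_mul_of_sq_eq sqrt_six_sq, Nat.reduceLeDiff, Nat.reduceSub]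
    ring_nf
  rw [β, h]
  ring

lemma γ_eq : γ = 4 * (12659 + 3448 * √6) / 90377 * α := by
  have h : √((-2665 + 1138 * √6) / 2) = 4 * (12659 + 3448 * √6) / 12911 * α := by
    refine sqrt_eq_mul_α (by positivity) ?_
    ring_nf
    simp only [pow_eq_pow_sub_two_mul_of_sq_eq sqrt_six_sq, Nat.reduceLeDiff, Nat.reduceSub]
    ring_nf
  rw [γ, h]
  ring

lemma hasDerivAt_Z (x : ℝ) : HasDerivAt Z (b1 + 2 * b2 * x + 3 * b3 * x ^ 2 + 4 * b4 * x ^ 3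
    + 5 * b5 * x ^ 4 + 6 * b6 * x ^ 5 + 7 * b7 * x ^ 6) x := by
  have h := (((((((hasDerivAt_const x b0).add ((hasDerivAt_id x).const_mul b1)).add
    ((hasDerivAt_pow 2 x).const_mul b2)).add ((hasDerivAt_pow 3 x).const_mul b3)).add
    ((hasDerivAt_pow 4 x).const_mul b4)).add ((hasDerivAt_pow 5 x).const_mul b5)).add
    ((hasDerivAt_pow 6 x).const_mul b6)).add ((hasDerivAt_pow 7 x).const_mul b7)
  refine h.congr_deriv ?_
  norm_num
  ring

set_option maxRecDepth 2000 in
/-- the septic normalized proper Zolotarev polynomial Z at parameter t = −21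
satisfies the Abel–Pell differential equation. -/
theorem stmt9 :
    ∀ x : ℝ,
      (1 - x ^ 2) * (x - α) * (x - β) * (deriv Z x) ^ 2 + 49 * (x - γ) ^ 2 * (Z x) ^ 2 =
        49 * (x - γ) ^ 2 := by
  intro x
  rw [(hasDerivAt_Z x).deriv, Z, b0, b2, b4, b6, b1_eq, b3_eq, b5_eq, b7_eq, β_eq, γ_eq]
  ring_nf
  simp only [pow_eq_pow_sub_two_mul_of_sq_eq α_sq, Nat.reduceLeDiff, Nat.reduceSub]
  ring_nf
  simp only [pow_eq_pow_sub_two_mul_of_sq_eq sqrt_six_sq, Nat.reduceLeDiff, Nat.reduceSub]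
  ring_nf
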